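/- For a lattice path ν beginning with a north step and ending with an east step, the set of ν-Dyck paths with exactly i high peaks is in bijection with the set of ν-Dyck paths with exactly i+1 peaks. -/

import Mathlib

/-- Steps of a (Schröder) lattice path: north, east, diagonal. -/
inductive Step : Type
  | N | E | D
deriving DecidableEq, Repr

/-- Total horizontal displacement of a path. -/
def eLen (p : List Step) : ℕ := p.count Step.E + p.count Step.D

/-- Total vertical displacement of a path. -/
def nLen (p : List Step) : ℕ := p.count Step.N + p.count Step.D

/-- A lattice path uses only `N` and `E` steps. -/
def IsLatticePath (ν : List Step) : Prop := Step.D ∉ ν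

/-- `colVal p x` is twice the starting height of the step of `p` crossing the vertical
strip between abscissas `x` and `x+1`, plus `1` if that step is diagonal.  Comparing these
values columnwise is equivalent to comparing the heights of the paths over each strip. -/
def colVal : List Step → ℕ → ℕ
  | [], _ => 0
  | Step.N :: p, x => colVal p x + 2
  | Step.E :: _, 0 => 0
  | Step.E :: p, x+1 => colVal p x
  | Step.D :: _, 0 => 1
  | Step.D :: p, x+1 => colVal p x + 2

/-- `π` stays weakly above `ρ` (same endpoints intended). -/
def WeaklyAbove (π ρ : List Step) : Prop := ∀ x, colVal ρ x ≤ colVal π x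

/-- Replace every peak (consecutive `NE`) of a path by a diagonal step; applied to `ν`
this gives the path `μ` of the large ν-Schröder path definition. -/
def cutPeaks : List Step → List Step
  | [] => []
  | Step.N :: Step.E :: p => Step.D :: cutPeaks p
  | s :: p => s :: cutPeaks p

/-- A ν-Dyck path: an `N,E` path with the same endpoints as `ν` staying weakly above `ν`. -/
def IsNuDyck (ν π : List Step) : Prop :=
  Step.D ∉ π ∧ eLen π = eLen ν ∧ nLen π = nLen ν ∧ WeaklyAbove π ν

/-- A (small) ν-Schröder path: an `N,E,D` path with the same endpoints as `ν` staying weakly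
above `ν` (this automatically forbids diagonal steps on the ν-diagonal). -/
def IsSmallSchroder (ν π : List Step) : Prop :=
  eLen π = eLen ν ∧ nLen π = nLen ν ∧ WeaklyAbove π ν

/-- A large ν-Schröder path: an `N,E,D` path with the same endpoints as `ν` staying weakly
above the path obtained from `ν` by replacing each peak by a diagonal step. -/
def IsLargeSchroder (ν π : List Step) : Prop :=
  eLen π = eLen ν ∧ nLen π = nLen ν ∧ WeaklyAbove π (cutPeaks ν)

/-- Number of peaks (consecutive `NE` pairs). -/
def peaks (p : List Step) : ℕ := (p.zip p.tail).count (Step.N, Step.E)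

/-- Number of valleys (consecutive `EN` pairs). -/
def valleys (p : List Step) : ℕ := (p.zip p.tail).count (Step.E, Step.N)

/-- Lattice points at which valleys of a path occur (starting the path at `(x,y)`). -/
def valleyPts : List Step → ℕ → ℕ → List (ℕ × ℕ)
  | [], _, _ => []
  | Step.E :: p, x, y =>
      (if p.head? = some Step.N then [(x+1, y)] else []) ++ valleyPts p (x+1) y
  | Step.N :: p, x, y => valleyPts p x (y+1)
  | Step.D :: p, x, y => valleyPts p (x+1) (y+1)

/-- Lattice points at which high peaks (peaks strictly above `ν`) of a path occur. -/
def highPeakPts (ν : List Step) : List Step → ℕ → ℕ → List (ℕ × ℕ)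
  | [], _, _ => []
  | Step.N :: p, x, y =>
      (if p.head? = some Step.E ∧ colVal ν x < 2*(y+1) then [(x, y+1)] else []) ++
        highPeakPts ν p x (y+1)
  | Step.E :: p, x, y => highPeakPts ν p (x+1) y
  | Step.D :: p, x, y => highPeakPts ν p (x+1) (y+1)

/-- Number of high peaks of `π` relative to `ν`. -/
def highPeaks (ν π : List Step) : ℕ := (highPeakPts ν π 0 0).length

/-- j-th ν-Narayana number: number of ν-Dyck paths with exactly `j` valleys. -/
noncomputable def Nar (ν : List Step) (j : ℕ) : ℕ :=
  Nat.card {π : List Step // IsNuDyck ν π ∧ valleys π = j}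

/-- Number of small ν-Schröder paths with exactly `i` diagonal steps. -/
noncomputable def schNum (ν : List Step) (i : ℕ) : ℕ :=
  Nat.card {π : List Step // IsSmallSchroder ν π ∧ π.count Step.D = i}

/-- `lowH ν x` is the lowest height of a point of `ν` at abscissa `x`. -/
def lowH : List Step → ℕ → ℕ
  | _, 0 => 0
  | [], _+1 => 0
  | Step.N :: p, x+1 => lowH p (x+1) + 1
  | Step.E :: p, x+1 => lowH p x
  | Step.D :: p, x+1 => lowH p x + 1

/-- The lowest lattice path from `(0,0)` to `(b,a)` weakly above the line segment
from `(0,0)` to `(b,a)`. -/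
def nuAB (a b : ℕ) : List Step :=
  (List.range b).flatMap (fun x =>
    List.replicate (((x+1)*a + b - 1)/b - (x*a + b - 1)/b) Step.N ++ [Step.E])

/-- Number of large rational `(a,b)`-Schröder paths with `i` diagonal steps. -/
noncomputable def largeCount (a b i : ℕ) : ℕ :=
  Nat.card {π : List Step // IsLargeSchroder (nuAB a b) π ∧ π.count Step.D = i}

/-- Number of small rational `(a,b)`-Schröder paths with `i` diagonal steps. -/
noncomputable def smallCount (a b i : ℕ) : ℕ :=
  Nat.card {π : List Step // IsSmallSchroder (nuAB a b) π ∧ π.count Step.D = i}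

/-- Binomial coefficient with an integer lower entry (zero when negative). -/
def chooseZ (n : ℕ) (k : ℤ) : ℕ := if 0 ≤ k then n.choose k.toNat else 0

/-- The region weakly above `ν` in the rectangle `[0,b] × [0,a]`. -/
def InRegion (ν : List Step) (p : ℕ × ℕ) : Prop :=
  p.1 ≤ eLen ν ∧ p.2 ≤ nLen ν ∧ lowH ν p.1 ≤ p.2

/-- Two points of the region are ν-incompatible if one is strictly southwest of the other and
the rectangle they span lies in the region (equivalently its bottom-right corner does). -/
def Incompat (ν : List Step) (p q : ℕ × ℕ) : Prop :=
  ((p.1 < q.1 ∧ p.2 < q.2) ∨ (q.1 < p.1 ∧ q.2 < p.2)) ∧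
    InRegion ν (max p.1 q.1, min p.2 q.2)

/-- A ν-binary tree: a maximal set of pairwise ν-compatible points of the region. -/
def IsBinaryTree (ν : List Step) (T : Finset (ℕ × ℕ)) : Prop :=
  (∀ p ∈ T, InRegion ν p) ∧ (∀ p ∈ T, ∀ q ∈ T, ¬ Incompat ν p q) ∧
    ∀ r, InRegion ν r → (∀ p ∈ T, ¬ Incompat ν r p) → r ∈ T

/-- A ν-Schröder tree: pairwise ν-compatible points of the region containing the root
`(0,a)` and meeting every row and every column. -/
def IsSchroderTree (ν : List Step) (T : Finset (ℕ × ℕ)) : Prop :=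
  (∀ p ∈ T, InRegion ν p) ∧ (∀ p ∈ T, ∀ q ∈ T, ¬ Incompat ν p q) ∧
    (0, nLen ν) ∈ T ∧ (∀ y ≤ nLen ν, ∃ p ∈ T, p.2 = y) ∧ (∀ x ≤ eLen ν, ∃ p ∈ T, p.1 = x)

/-- One contraction step: delete a node, provided the result is still a ν-Schröder tree. -/
def ContractStep (ν : List Step) (T T' : Finset (ℕ × ℕ)) : Prop :=
  ∃ q ∈ T, T' = T.erase q ∧ IsSchroderTree ν T'

/-- `p` is a leaf of the (plane tree associated to the) node set `T`: no node strictly below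
it in its column and none strictly to its right in its row. -/
def IsLeafIn (T : Finset (ℕ × ℕ)) (p : ℕ × ℕ) : Prop :=
  (∀ q ∈ T, ¬(q.1 = p.1 ∧ q.2 < p.2)) ∧ (∀ q ∈ T, ¬(q.2 = p.2 ∧ p.1 < q.1))

/-- Starting points of vertical runs and ending points of horizontal runs of `ν`. -/
def leafPts (ν : List Step) : Finset (ℕ × ℕ) :=
  (valleyPts ν 0 0).toFinset ∪ (if ν.head? = some Step.N then {((0 : ℕ), (0 : ℕ))} else ∅) ∪
    (if ν.getLast? = some Step.E then {(eLen ν, nLen ν)} else ∅)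

/-- `horizNu ν x y`: maximal number of east steps that can be placed starting at `(x,y)`
before crossing `ν` (staying within the bounding rectangle). -/
def horizNu (ν : List Step) (x y : ℕ) : ℕ :=
  ((Finset.Icc 1 (eLen ν - x)).filter (fun k => lowH ν (x + k) ≤ y)).card

/-- No `N` step of the given path (started at `(x,y)`) has initial point with
`horizNu`-value `h`. -/
def noNAt (ν : List Step) (h : ℕ) : List Step → ℕ → ℕ → Prop
  | [], _, _ => True
  | Step.N :: p, x, y => horizNu ν x y ≠ h ∧ noNAt ν h p x (y+1)
  | Step.E :: p, x, y => noNAt ν h p (x+1) y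
  | Step.D :: p, x, y => noNAt ν h p (x+1) (y+1)

/-- Right contraction: replace a consecutive `EN` pair (a valley) by a `D` step. -/
def RightC (μ lam : List Step) : Prop :=
  ∃ p q, μ = p ++ Step.E :: Step.N :: q ∧ lam = p ++ Step.D :: q

/-- Left contraction: delete an `E` step together with the most recent preceding `N` step
whose initial point has the same `horizNu` statistic as the initial point of the `E` step,
shift the intermediate subpath, and place a `D` step at the initial point of the `N` step. -/
def LeftC (ν μ lam : List Step) : Prop :=
  ∃ p m q, μ = p ++ Step.N :: (m ++ Step.E :: q) ∧ lam = p ++ Step.D :: (m ++ q) ∧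
    horizNu ν (eLen p) (nLen p)
      = horizNu ν (eLen (p ++ Step.N :: m)) (nLen (p ++ Step.N :: m)) ∧
    noNAt ν (horizNu ν (eLen (p ++ Step.N :: m)) (nLen (p ++ Step.N :: m)))
      m (eLen p) (nLen p + 1)

/-- Diagonal contraction: delete an `E` step ending at the initial point `r` of a `D` step,
together with the most recent preceding `N` step whose initial point `s` satisfies
`horizNu s = horizNu r`, shift the intermediate subpath, and place a `D` step at `s`. -/
def DiagC (ν μ lam : List Step) : Prop :=
  ∃ p m q, μ = p ++ Step.N :: (m ++ Step.E :: Step.D :: q) ∧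
    lam = p ++ Step.D :: (m ++ Step.D :: q) ∧
    horizNu ν (eLen p) (nLen p)
      = horizNu ν (eLen (p ++ Step.N :: m) + 1) (nLen (p ++ Step.N :: m)) ∧
    noNAt ν (horizNu ν (eLen (p ++ Step.N :: m) + 1) (nLen (p ++ Step.N :: m)))
      m (eLen p) (nLen p + 1)

/-- Cover relation of the contraction poset of ν-Schröder paths. -/
def Covers (ν μ lam : List Step) : Prop :=
  IsSmallSchroder ν μ ∧ IsSmallSchroder ν lam ∧
    (RightC μ lam ∨ LeftC ν μ lam ∨ DiagC ν μ lam)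

/-- The Morse matching: `σ` (having a `D` step preceded by no valley) is matched with the
path `π` obtained by replacing the first such `D` step by `EN`. -/
def MorseM (ν : List Step) : Set (List Step × List Step) :=
  { z | ∃ p q, Step.D ∉ p ∧ valleys p = 0 ∧
      z.2 = p ++ Step.D :: q ∧ z.1 = p ++ Step.E :: Step.N :: q ∧ IsSmallSchroder ν z.2 }

/-- Twice the area between a small ν-Schröder path and `ν`. -/
def area2 (ν π : List Step) : ℕ :=
  ∑ x ∈ Finset.range (eLen ν), (colVal π x - colVal ν x)

/-- An `(I,J̄)`-forest: increasing, non-crossing arcs. -/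
def IsIJForest (I J : Finset ℕ) (F : Finset (ℕ × ℕ)) : Prop :=
  (∀ a ∈ F, a.1 ∈ I ∧ a.2 ∈ J ∧ a.1 < a.2) ∧
    (∀ a ∈ F, ∀ a' ∈ F, ¬(a.1 < a'.1 ∧ a'.1 < a.2 ∧ a.2 < a'.2))

/-- A covering `(I,J̄)`-forest: contains the arc `(1,n)` and has no isolated node. -/
def IsCoveringForest (n : ℕ) (I J : Finset ℕ) (F : Finset (ℕ × ℕ)) : Prop :=
  IsIJForest I J F ∧ (1, n) ∈ F ∧
    (∀ i ∈ I, ∃ a ∈ F, a.1 = i) ∧ (∀ j ∈ J, ∃ a ∈ F, a.2 = j)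

/-- The lattice path read off from the interleaving of `I` and `J̄` (elements `2,…,n-1`,
`E` for elements of `I`, `N` for the others). -/
def nuOf (n : ℕ) (I : Finset ℕ) : List Step :=
  (List.range' 2 (n - 2)).map (fun k => if k ∈ I then Step.E else Step.N)

/-!
Count the small ν-Schröder paths with `i` diagonal steps in two ways. Replacing every `D` by
`NE` sends them to ν-Dyck paths, and those sent to a given `π` correspond to the `i`-element
sets of high peaks of `π`: a `D` step stays weakly above ν iff the peak it cuts off is high.
Replacing every `D` by `EN` instead, those sent to `π` correspond to the `i`-element sets of
valleys of `π`, because lowering a `D` step to `EN` never crosses the `N,E` path ν. Hence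
`∑_π C(highPeaks π, i) = ∑_π C(valleys π, i)` for every `i`; substituting `X - 1` for `X` in
`∑_π (X + 1) ^ f(π)` inverts these binomial sums, so high peaks and valleys are equidistributed
over ν-Dyck paths. Finally, a ν-Dyck path starts with `N` and ends with `E`, so it has exactly one
more peak than valleys.
-/

open Step

instance : Fintype Step :=
  ⟨⟨{Step.N, Step.E, Step.D}, by decide⟩, fun s => by cases s <;> decide⟩

open Polynomial in
theorem card_filter_eq_of_sum_choose_eq {α : Type*} (s : Finset α) (f g : α → ℕ)
    (h : ∀ j, ∑ a ∈ s, (f a).choose j = ∑ a ∈ s, (g a).choose j) (i : ℕ) :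
    (s.filter (f · = i)).card = (s.filter (g · = i)).card := by
  classical
  have hX1 : ∑ a ∈ s, (X + 1 : ℤ[X]) ^ f a = ∑ a ∈ s, (X + 1) ^ g a := by
    ext j
    simp only [finsetSum_coeff, coeff_X_add_one_pow]
    exact_mod_cast h j
  have hX : ∑ a ∈ s, (X : ℤ[X]) ^ f a = ∑ a ∈ s, X ^ g a := by
    have := congrArg (·.comp (X - 1)) hX1
    simp only [Polynomial.sum_comp, pow_comp, add_comp, X_comp, one_comp, sub_add_cancel] at this
    exact this
  have := congrArg (coeff · i) hX
  simp only [finsetSum_coeff, coeff_X_pow, Finset.sum_boole] at this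
  simpa [eq_comm] using this

lemma eLen_cons (s : Step) (p : List Step) : eLen (s :: p) = eLen p + if s = N then 0 else 1 := by
  cases s <;> simp [eLen] <;> omega

lemma nLen_cons (s : Step) (p : List Step) : nLen (s :: p) = nLen p + if s = E then 0 else 1 := by
  cases s <;> simp [nLen] <;> omega

lemma eLen_append (p p' : List Step) : eLen (p ++ p') = eLen p + eLen p' := by
  simp only [eLen, List.count_append]
  omega

lemma nLen_append (p p' : List Step) : nLen (p ++ p') = nLen p + nLen p' := by
  simp only [nLen, List.count_append]
  omega

lemma colVal_le_two_mul_nLen (p : List Step) (x : ℕ) : colVal p x ≤ 2 * nLen p := by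
  induction p generalizing x with
  | nil => simp [colVal]
  | cons s p ih =>
    have h₀ := ih x
    cases s <;> cases x <;> simp [colVal, nLen_cons] <;> grind

lemma colVal_append_of_lt {p : List Step} {x : ℕ} (hx : x < eLen p) (p' : List Step) :
    colVal (p ++ p') x = colVal p x := by
  induction p generalizing x with
  | nil => simp [eLen] at hx
  | cons s p ih =>
    rw [eLen_cons] at hx
    cases s <;> cases x <;> simp [colVal] at hx ⊢ <;> exact ih (by omega)

lemma colVal_append_E_eLen (p : List Step) : colVal (p ++ [E]) (eLen p) = 2 * nLen p := by
  induction p with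
  | nil => rfl
  | cons s p ih => cases s <;> simp [colVal, eLen_cons, nLen_cons, ih] <;> ring

lemma length_le_eLen_add_nLen (σ : List Step) : σ.length ≤ eLen σ + nLen σ := by
  induction σ with
  | nil => simp
  | cons s σ ih => cases s <;> simp [eLen_cons, nLen_cons] <;> omega

lemma colVal_mod_two_eq_zero {p : List Step} (hp : D ∉ p) (x : ℕ) : colVal p x % 2 = 0 := by
  induction p generalizing x with
  | nil => rfl
  | cons s p ih =>
    cases s with
    | N =>
      have := ih (by simp_all) x
      simp only [colVal]
      omega
    | E => cases x <;> simp_all [colVal]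
    | D => simp at hp

namespace Step

def move : Step → ℕ × ℕ → ℕ × ℕ
  | N, q => (q.1, q.2 + 1)
  | E, q => (q.1 + 1, q.2)
  | D, q => (q.1 + 1, q.2 + 1)

lemma lt_move (s : Step) (q : ℕ × ℕ) : q.1 + q.2 < (s.move q).1 + (s.move q).2 := by
  cases s <;> simp only [move] <;> omega

lemma move_move_eq_move_D {a b : Step} (hab : a ≠ b) (ha : a ≠ D) (hb : b ≠ D)
    (q : ℕ × ℕ) : b.move (a.move q) = D.move q := by
  cases a <;> cases b <;> simp_all [move]

end Step

section Expansion

variable (a b : Step)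

def expandD : List Step → List Step
  | [] => []
  | N :: σ => N :: expandD σ
  | E :: σ => E :: expandD σ
  | D :: σ => a :: b :: expandD σ

def cornerPts : List Step → ℕ × ℕ → List (ℕ × ℕ)
  | [], _ => []
  | s :: π, q => (if s = a ∧ π.head? = some b then [a.move q] else []) ++ cornerPts π (s.move q)

def dCornerPts : List Step → ℕ × ℕ → List (ℕ × ℕ)
  | [], _ => []
  | s :: σ, q => (if s = D then [a.move q] else []) ++ dCornerPts σ (s.move q)

def contractD (T : Finset (ℕ × ℕ)) : List Step → ℕ × ℕ → List Step
  | [], _ => []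
  | [s], _ => [s]
  | s :: t :: π, q =>
      if s = a ∧ t = b ∧ a.move q ∈ T then D :: contractD T π (D.move q)
      else s :: contractD T (t :: π) (s.move q)

variable {a b} (T : Finset (ℕ × ℕ))

lemma lt_of_mem_cornerPts {π : List Step} {q r : ℕ × ℕ} (h : r ∈ cornerPts a b π q) :
    q.1 + q.2 < r.1 + r.2 := by
  induction π generalizing q with
  | nil => simp [cornerPts] at h
  | cons s π ih =>
    simp only [cornerPts, List.mem_append] at h
    rcases h with h | h
    · split_ifs at h with hs
      · rw [List.mem_singleton.mp h, ← hs.1]; exact lt_move s q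
      · simp at h
    · exact (lt_move s q).trans (ih h)

lemma lt_of_mem_dCornerPts {σ : List Step} {q r : ℕ × ℕ} (h : r ∈ dCornerPts a σ q) :
    q.1 + q.2 < r.1 + r.2 := by
  induction σ generalizing q with
  | nil => simp [dCornerPts] at h
  | cons s σ ih =>
    simp only [dCornerPts, List.mem_append] at h
    rcases h with h | h
    · split_ifs at h
      · rw [List.mem_singleton.mp h]; exact lt_move a q
      · simp at h
    · exact (lt_move s q).trans (ih h)

lemma nodup_cornerPts (π : List Step) (q : ℕ × ℕ) : (cornerPts a b π q).Nodup := by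
  induction π generalizing q with
  | nil => simp [cornerPts]
  | cons s π ih =>
    simp only [cornerPts]
    split_ifs with hs
    · refine List.nodup_cons.mpr ⟨fun h => ?_, ih _⟩
      have := lt_of_mem_cornerPts h
      rw [← hs.1] at this
      exact lt_irrefl _ this
    · exact ih _

lemma count_D_eq_length_dCornerPts (σ : List Step) (q : ℕ × ℕ) :
    σ.count D = (dCornerPts a σ q).length := by
  induction σ generalizing q with
  | nil => rfl
  | cons s σ ih => cases s <;> simp [dCornerPts, ← ih]

lemma length_cornerPts (π : List Step) (q : ℕ × ℕ) :
    (cornerPts a b π q).length = (π.zip π.tail).count (a, b) := by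
  induction π generalizing q with
  | nil => rfl
  | cons s π ih =>
    cases π with
    | nil => simp [cornerPts]
    | cons t π =>
      rw [cornerPts, List.length_append, ih, List.tail_cons, List.tail_cons, List.zip_cons_cons,
        List.count_cons]
      by_cases h : s = a ∧ t = b <;> simp [h, add_comm]

lemma D_notMem_expandD (ha : a ≠ D) (hb : b ≠ D) (σ : List Step) : D ∉ expandD a b σ := by
  induction σ with
  | nil => simp [expandD]
  | cons s σ ih => cases s <;> simp_all [expandD, eq_comm]

lemma contractD_cons_of_not {s : Step} {π : List Step} {q : ℕ × ℕ}
    (h : ¬(s = a ∧ π.head? = some b ∧ a.move q ∈ T)) :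
    contractD a b T (s :: π) q = s :: contractD a b T π (s.move q) := by
  cases π with
  | nil => rfl
  | cons t π => simp_all [contractD]

lemma expandD_contractD {π : List Step} (hπ : D ∉ π) (q : ℕ × ℕ) :
    expandD a b (contractD a b T π q) = π := by
  induction π using List.twoStepInduction generalizing q with
  | nil => rfl
  | singleton s => cases s <;> simp_all [contractD, expandD]
  | cons_cons s t π ih ih' =>
    rw [contractD]
    split_ifs with h
    · obtain ⟨rfl, rfl, -⟩ := h
      simp_all [expandD]
    · cases s <;> simp_all [expandD]

variable (hab : a ≠ b) (ha : a ≠ D) (hb : b ≠ D)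
include hab ha hb

lemma eLen_expandD (σ : List Step) : eLen (expandD a b σ) = eLen σ := by
  induction σ with
  | nil => rfl
  | cons s σ ih =>
    cases a <;> cases b <;> cases s <;> simp_all [expandD, eLen] <;> omega

lemma nLen_expandD (σ : List Step) : nLen (expandD a b σ) = nLen σ := by
  induction σ with
  | nil => rfl
  | cons s σ ih =>
    cases a <;> cases b <;> cases s <;> simp_all [expandD, nLen] <;> omega

lemma dCornerPts_sublist_cornerPts (σ : List Step) (q : ℕ × ℕ) :
    (dCornerPts a σ q).Sublist (cornerPts a b (expandD a b σ) q) := by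
  induction σ generalizing q with
  | nil => simp [dCornerPts]
  | cons s σ ih =>
    cases s with
    | D =>
      simpa [dCornerPts, cornerPts, expandD, Ne.symm hab, move_move_eq_move_D hab ha hb]
        using (ih (D.move q)).cons_cons (a.move q)
    | N | E => exact (ih _).trans (List.sublist_append_right _ _)

lemma dCornerPts_contractD {π : List Step} (hπ : D ∉ π) (q : ℕ × ℕ) :
    dCornerPts a (contractD a b T π q) q = (cornerPts a b π q).filter (· ∈ T) := by
  induction π using List.twoStepInduction generalizing q with
  | nil => rfl
  | singleton s => cases s <;> simp_all [contractD, dCornerPts, cornerPts]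
  | cons_cons s t π ih ih' =>
    rw [contractD]
    split_ifs with h
    · obtain ⟨rfl, rfl, hq⟩ := h
      simp_all [dCornerPts, cornerPts, Ne.symm hab, move_move_eq_move_D hab ha hb]
    · have hs : s ≠ D := by rintro rfl; simp at hπ
      rw [dCornerPts, if_neg hs, List.nil_append, ih' _ (by simp_all)]
      conv_rhs => rw [cornerPts, List.filter_append]
      by_cases hst : s = a ∧ t = b <;> simp_all

lemma contractD_expandD (σ : List Step) (q : ℕ × ℕ)
    (hsub : ∀ r ∈ dCornerPts a σ q, r ∈ T)
    (hsup : ∀ r ∈ cornerPts a b (expandD a b σ) q, r ∈ T → r ∈ dCornerPts a σ q) :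
    contractD a b T (expandD a b σ) q = σ := by
  induction σ generalizing q with
  | nil => rfl
  | cons s σ ih =>
    cases s with
    | D =>
      have hq : a.move q ∈ T := hsub _ (by simp [dCornerPts])
      rw [expandD, contractD, if_pos ⟨rfl, rfl, hq⟩, ih]
      · intro r hr
        exact hsub r (List.mem_append_right _ hr)
      · intro r hr hrT
        have hmem := hsup r
          (by simp [expandD, cornerPts, Ne.symm hab, move_move_eq_move_D hab ha hb, hr]) hrT
        simp only [dCornerPts, if_true, List.singleton_append, List.mem_cons] at hmem
        refine hmem.resolve_left fun hra => ?_
        have h₁ := lt_of_mem_cornerPts hr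
        have h₂ := lt_move b (a.move q)
        rw [move_move_eq_move_D hab ha hb, ← hra] at h₂
        omega
    | N | E =>
      simp only [dCornerPts, reduceCtorEq, if_false, List.nil_append] at hsub hsup ⊢
      rw [expandD, contractD_cons_of_not, ih]
      · exact hsub
      · exact fun r hr => hsup r (List.mem_append_right _ hr)
      · rintro ⟨rfl, hb', hq⟩
        have := lt_of_mem_dCornerPts (hsup _ (by simp [cornerPts, expandD, hb']) hq)
        exact lt_irrefl _ this

theorem card_filter_expandD_eq_choose {π : List Step} (hπ : D ∉ π) (q : ℕ × ℕ)
    {A : Finset (ℕ × ℕ)} (hA : ∀ r ∈ A, r ∈ cornerPts a b π q) (S : Finset (List Step)) (i : ℕ)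
    (hS : ∀ σ, expandD a b σ = π → (σ ∈ S ↔ σ.count D = i ∧ ∀ r ∈ dCornerPts a σ q, r ∈ A)) :
    (S.filter (expandD a b · = π)).card = A.card.choose i := by
  classical
  have hfilter : ∀ T ⊆ A, ((cornerPts a b π q).filter (· ∈ T)).toFinset = T := by
    intro T hT
    ext r
    simpa using fun hr => hA r (hT hr)
  rw [← Finset.card_powersetCard]
  refine Finset.card_nbij' (fun σ => (dCornerPts a σ q).toFinset)
    (fun T => contractD a b T π q) ?_ ?_ ?_ ?_
  · intro σ hσ
    obtain ⟨hσS, rfl⟩ := Finset.mem_filter.mp hσ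
    obtain ⟨hcount, hsub⟩ := (hS σ rfl).mp hσS
    refine Finset.mem_powersetCard.mpr ⟨fun r hr => hsub r (List.mem_toFinset.mp hr), ?_⟩
    rw [List.toFinset_card_of_nodup ((dCornerPts_sublist_cornerPts hab ha hb σ q).nodup
      (nodup_cornerPts _ q)), ← count_D_eq_length_dCornerPts, hcount]
  · intro T hT
    obtain ⟨hTA, hcard⟩ := Finset.mem_powersetCard.mp hT
    have hexp : expandD a b (contractD a b T π q) = π := expandD_contractD T hπ q
    refine Finset.mem_filter.mpr ⟨(hS _ hexp).mpr ⟨?_, fun r hr => ?_⟩, hexp⟩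
    · rw [count_D_eq_length_dCornerPts _ q, dCornerPts_contractD T hab ha hb hπ, ← hcard,
        ← List.toFinset_card_of_nodup ((nodup_cornerPts π q).filter _), hfilter T hTA]
    · rw [dCornerPts_contractD T hab ha hb hπ] at hr
      exact hTA (by simpa using (List.mem_filter.mp hr).2)
  · intro σ hσ
    obtain ⟨-, rfl⟩ := Finset.mem_filter.mp hσ
    exact contractD_expandD _ hab ha hb σ q (fun r hr => List.mem_toFinset.mpr hr)
      (fun r _ hr => List.mem_toFinset.mp hr)
  · intro T hT
    simp only [dCornerPts_contractD T hab ha hb hπ]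
    exact hfilter T (Finset.mem_powersetCard.mp hT).1

end Expansion

lemma colVal_expandD_N_E (σ : List Step) (x : ℕ) :
    colVal (expandD N E σ) x = colVal σ x + colVal σ x % 2 := by
  induction σ generalizing x with
  | nil => rfl
  | cons s σ ih =>
    cases s <;> cases x <;> simp only [expandD, colVal, ih] <;> omega

lemma colVal_expandD_E_N (σ : List Step) (x : ℕ) :
    colVal (expandD E N σ) x + colVal σ x % 2 = colVal σ x := by
  induction σ generalizing x with
  | nil => rfl
  | cons s σ ih =>
    cases s with
    | N =>
      have := ih x
      simp only [expandD, colVal]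
      omega
    | E => cases x with
      | zero => rfl
      | succ x => exact ih x
    | D => cases x with
      | zero => rfl
      | succ x =>
        have := ih x
        simp only [expandD, colVal]
        omega

lemma mem_dCornerPts_iff (a : Step) (σ : List Step) (q r : ℕ × ℕ) :
    r ∈ dCornerPts a σ q ↔ ∃ x c, colVal σ x = 2 * c + 1 ∧ r = a.move (q.1 + x, q.2 + c) := by
  induction σ generalizing q with
  | nil => simp [dCornerPts, colVal]
  | cons s σ ih =>
    cases s with
    | N =>
      simp only [dCornerPts, reduceCtorEq, if_false, List.nil_append, ih, move, colVal]
      constructor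
      · rintro ⟨x, c, h, rfl⟩
        exact ⟨x, c + 1, by omega, by congr 2; omega⟩
      · rintro ⟨x, _ | c, h, rfl⟩
        · omega
        · exact ⟨x, c, by omega, by congr 2; omega⟩
    | E =>
      simp only [dCornerPts, reduceCtorEq, if_false, List.nil_append, ih, move]
      constructor
      · rintro ⟨x, c, h, rfl⟩
        exact ⟨x + 1, c, h, by congr 2; omega⟩
      · rintro ⟨_ | x, c, h, rfl⟩
        · simp [colVal] at h
        · exact ⟨x, c, h, by congr 2; omega⟩
    | D =>
      simp only [dCornerPts, if_true, List.singleton_append, List.mem_cons, ih, move]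
      constructor
      · rintro (rfl | ⟨x, c, h, rfl⟩)
        · exact ⟨0, 0, rfl, rfl⟩
        · exact ⟨x + 1, c + 1, by simp [colVal, h]; omega, by congr 2 <;> omega⟩
      · rintro ⟨_ | x, c, h, rfl⟩
        · obtain rfl : c = 0 := by simp [colVal] at h; omega
          exact Or.inl rfl
        · obtain ⟨c, rfl⟩ : ∃ c', c = c' + 1 := ⟨c - 1, by simp [colVal] at h; omega⟩
          exact Or.inr ⟨x, c, by simp [colVal] at h; omega, by congr 2 <;> omega⟩

lemma isNuDyck_expandD_iff {a b : Step} (hab : a ≠ b) (ha : a ≠ D) (hb : b ≠ D)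
    (ν σ : List Step) :
    IsNuDyck ν (expandD a b σ) ↔
      eLen σ = eLen ν ∧ nLen σ = nLen ν ∧ WeaklyAbove (expandD a b σ) ν := by
  simp only [IsNuDyck, D_notMem_expandD ha hb, not_false_eq_true, true_and,
    eLen_expandD hab ha hb, nLen_expandD hab ha hb]

/-- A `D` step from `(x, c)` has `colVal = 2 * c + 1`, so it stays weakly above `ν` iff
`colVal ν x < 2 * (c + 1)`, that is, iff the peak `(x, c + 1)` that replaces it is high. -/
theorem isSmallSchroder_iff_expandD_N_E (ν σ : List Step) :
    IsSmallSchroder ν σ ↔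
      IsNuDyck ν (expandD N E σ) ∧ ∀ r ∈ dCornerPts N σ (0, 0), colVal ν r.1 < 2 * r.2 := by
  rw [isNuDyck_expandD_iff (by decide) (by decide) (by decide), IsSmallSchroder, and_assoc,
    and_assoc]
  refine and_congr_right' (and_congr_right' ?_)
  simp only [mem_dCornerPts_iff, WeaklyAbove, colVal_expandD_N_E]
  constructor
  · intro h
    refine ⟨fun x => (h x).trans (Nat.le_add_right _ _), ?_⟩
    rintro r ⟨x, c, hx, rfl⟩
    have := h x
    simp only [move, zero_add]
    omega
  · rintro ⟨h, hcorner⟩ x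
    rcases Nat.mod_two_eq_zero_or_one (colVal σ x) with hx | hx
    · have := h x
      omega
    · have := hcorner (N.move (x, colVal σ x / 2)) ⟨x, colVal σ x / 2, by omega, by simp⟩
      simp only [move] at this
      omega

theorem isSmallSchroder_iff_expandD_E_N {ν : List Step} (hν : D ∉ ν) (σ : List Step) :
    IsSmallSchroder ν σ ↔ IsNuDyck ν (expandD E N σ) := by
  rw [isNuDyck_expandD_iff (by decide) (by decide) (by decide), IsSmallSchroder]
  refine and_congr_right' (and_congr_right' (forall_congr' fun x => ?_))
  have h₁ := colVal_expandD_E_N σ x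
  have h₂ := colVal_mod_two_eq_zero hν x
  omega

lemma finite_setOf_isSmallSchroder (ν : List Step) : {σ | IsSmallSchroder ν σ}.Finite :=
  (List.finite_length_le Step (eLen ν + nLen ν)).subset fun σ ⟨he, hn, _⟩ =>
    he ▸ hn ▸ length_le_eLen_add_nLen σ

noncomputable def nuDyckPaths (ν : List Step) : Finset (List Step) :=
  ((finite_setOf_isSmallSchroder ν).subset (t := {π | IsNuDyck ν π})
    fun _ hπ => ⟨hπ.2.1, hπ.2.2.1, hπ.2.2.2⟩).toFinset

lemma mem_nuDyckPaths {ν π : List Step} : π ∈ nuDyckPaths ν ↔ IsNuDyck ν π :=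
  Set.Finite.mem_toFinset _

noncomputable def smallSchroderPaths (ν : List Step) (i : ℕ) : Finset (List Step) :=
  ((finite_setOf_isSmallSchroder ν).subset (t := {σ | IsSmallSchroder ν σ ∧ σ.count D = i})
    fun _ hσ => hσ.1).toFinset

lemma mem_smallSchroderPaths {ν σ : List Step} {i : ℕ} :
    σ ∈ smallSchroderPaths ν i ↔ IsSmallSchroder ν σ ∧ σ.count D = i :=
  Set.Finite.mem_toFinset _

lemma schNum_eq_card_smallSchroderPaths (ν : List Step) (i : ℕ) :
    schNum ν i = (smallSchroderPaths ν i).card :=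
  Nat.card_eq_card_finite_toFinset _

lemma highPeakPts_eq_filter_cornerPts (ν π : List Step) (x y : ℕ) :
    highPeakPts ν π x y = (cornerPts N E π (x, y)).filter fun r => colVal ν r.1 < 2 * r.2 := by
  induction π generalizing x y with
  | nil => rfl
  | cons s π ih =>
    cases s <;> simp only [highPeakPts, cornerPts, ih, List.filter_append, move] <;>
      split_ifs <;> simp_all

theorem schNum_eq_sum_choose_highPeaks (ν : List Step) (i : ℕ) :
    schNum ν i = ∑ π ∈ nuDyckPaths ν, (highPeaks ν π).choose i := by
  classical
  rw [schNum_eq_card_smallSchroderPaths, Finset.card_eq_sum_card_fiberwise (f := expandD N E)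
    fun σ hσ => mem_nuDyckPaths.mpr
      ((isSmallSchroder_iff_expandD_N_E ν σ).mp (mem_smallSchroderPaths.mp hσ).1).1]
  refine Finset.sum_congr rfl fun π hπ => ?_
  have hA := highPeakPts_eq_filter_cornerPts ν π 0 0
  rw [highPeaks, ← List.toFinset_card_of_nodup (hA ▸ (nodup_cornerPts π _).filter _)]
  refine card_filter_expandD_eq_choose (by decide) (by decide) (by decide)
    (mem_nuDyckPaths.mp hπ).1 (0, 0) (fun r hr => ?_) _ i fun σ hσ => ?_
  · rw [List.mem_toFinset, hA] at hr
    exact (List.mem_filter.mp hr).1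
  · have hcorner : ∀ r ∈ dCornerPts N σ (0, 0), r ∈ cornerPts N E π (0, 0) := fun r hr =>
      hσ ▸ (dCornerPts_sublist_cornerPts (by decide) (by decide) (by decide) σ _).subset hr
    rw [mem_smallSchroderPaths, isSmallSchroder_iff_expandD_N_E, hσ, and_comm]
    simp only [mem_nuDyckPaths.mp hπ, true_and, List.mem_toFinset, hA, List.mem_filter,
      decide_eq_true_eq]
    exact and_congr_right' (forall₂_congr fun r hr => (and_iff_right (hcorner r hr)).symm)

theorem schNum_eq_sum_choose_valleys {ν : List Step} (hν : D ∉ ν) (i : ℕ) :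
    schNum ν i = ∑ π ∈ nuDyckPaths ν, (valleys π).choose i := by
  classical
  rw [schNum_eq_card_smallSchroderPaths, Finset.card_eq_sum_card_fiberwise (f := expandD E N)
    fun σ hσ => mem_nuDyckPaths.mpr
      ((isSmallSchroder_iff_expandD_E_N hν σ).mp (mem_smallSchroderPaths.mp hσ).1)]
  refine Finset.sum_congr rfl fun π hπ => ?_
  rw [valleys, ← length_cornerPts (q := (0, 0)),
    ← List.toFinset_card_of_nodup (nodup_cornerPts π _)]
  refine card_filter_expandD_eq_choose (by decide) (by decide) (by decide)
    (mem_nuDyckPaths.mp hπ).1 (0, 0) (fun r hr => List.mem_toFinset.mp hr) _ i fun σ hσ => ?_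
  rw [mem_smallSchroderPaths, isSmallSchroder_iff_expandD_E_N hν, hσ]
  simp only [mem_nuDyckPaths.mp hπ, true_and, List.mem_toFinset, iff_self_and]
  exact fun _ r hr =>
    hσ ▸ (dCornerPts_sublist_cornerPts (by decide) (by decide) (by decide) σ _).subset hr

lemma peaks_add_ite_eq_valleys_add_ite {π : List Step} (hπ : D ∉ π) :
    peaks π + (if π.getLast? = some N then 1 else 0) =
      valleys π + (if π.head? = some N then 1 else 0) := by
  induction π with
  | nil => rfl
  | cons s π ih =>
    cases π with
    | nil => cases s <;> simp_all [peaks, valleys]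
    | cons t π =>
      have := ih (by simp_all)
      simp only [peaks, valleys, List.tail_cons, List.zip_cons_cons, List.count_cons,
        List.getLast?_cons_cons, List.head?_cons] at this ⊢
      cases s <;> cases t <;> simp_all
      omega

lemma head?_eq_N_of_isNuDyck {ν π : List Step} (hhead : ν.head? = some N)
    (hπ : IsNuDyck ν π) : π.head? = some N := by
  obtain ⟨ν, rfl⟩ := List.head?_eq_some_iff.mp hhead
  have := hπ.2.2.2 0
  cases π with
  | nil => simp [colVal] at this
  | cons s π => cases s <;> simp_all [colVal]

lemma getLast?_eq_E_of_isNuDyck {ν π : List Step} (hlast : ν.getLast? = some E)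
    (hπ : IsNuDyck ν π) : π.getLast? = some E := by
  obtain ⟨ρ, rfl⟩ := List.getLast?_eq_some_iff.mp hlast
  obtain ⟨hD, he, hn, hw⟩ := hπ
  rcases π.eq_nil_or_concat' with rfl | ⟨τ, s, rfl⟩
  · simp [eLen] at he
    omega
  cases s with
  | E => simp
  | D => simp at hD
  | N =>
    simp only [eLen_append, nLen_append, eLen_cons, nLen_cons, reduceCtorEq, ↓reduceIte] at he hn
    have hcol := hw (eLen ρ)
    rw [colVal_append_E_eLen, colVal_append_of_lt (by omega)] at hcol
    have := colVal_le_two_mul_nLen τ (eLen ρ)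
    omega

theorem peaks_eq_valleys_add_one {ν π : List Step} (hhead : ν.head? = some N)
    (hlast : ν.getLast? = some E) (hπ : IsNuDyck ν π) : peaks π = valleys π + 1 := by
  simpa [head?_eq_N_of_isNuDyck hhead hπ, getLast?_eq_E_of_isNuDyck hlast hπ] using
    peaks_add_ite_eq_valleys_add_ite hπ.1

/-- For a lattice path ν beginning with a north step and ending with an east
step, ν-Dyck paths with exactly `i` high peaks are in bijection with ν-Dyck paths with exactly
`i+1` peaks. -/
theorem highPeaks_equiv_peaks (ν : List Step) (hν : IsLatticePath ν)
    (hhead : ν.head? = some Step.N) (hlast : ν.getLast? = some Step.E) (i : ℕ) :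
    Nonempty ({π : List Step // IsNuDyck ν π ∧ highPeaks ν π = i}
      ≃ {π : List Step // IsNuDyck ν π ∧ peaks π = i + 1}) := by
  classical
  have hcard : ((nuDyckPaths ν).filter (highPeaks ν · = i)).card =
      ((nuDyckPaths ν).filter (peaks · = i + 1)).card := by
    rw [card_filter_eq_of_sum_choose_eq _ _ valleys fun j =>
      (schNum_eq_sum_choose_highPeaks ν j).symm.trans (schNum_eq_sum_choose_valleys hν j)]
    refine congrArg Finset.card (Finset.filter_congr fun π hπ => ?_)
    rw [peaks_eq_valleys_add_one hhead hlast (mem_nuDyckPaths.mp hπ), Nat.add_right_cancel_iff]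
  have e (P : List Step → Prop) [DecidablePred P] :
      {π // IsNuDyck ν π ∧ P π} ≃ (nuDyckPaths ν).filter P :=
    Equiv.subtypeEquivRight fun π => by simp [mem_nuDyckPaths]
  exact ⟨(e _).trans ((Finset.equivOfCardEq hcard).trans (e _).symm)⟩
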